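/- arXiv:2102.09552 — 6 statements merged into one kernel-verified Lean document; each statement's English description precedes it below -/
import Mathlib

section
/- Let f : ℝᵈ → ℝ̄ be such that: (1) f⁻¹({+∞}) and f⁻¹({-∞}) are convex cones with f⁻¹({+∞}) = -f⁻¹({-∞}); (2) F = f⁻¹(ℝ) is a linear subspace of ℝᵈ; and (3) f restricted to F is a finite linear function. Then f is a linear extended function. -/
/-- A *linear extended function*: scaling and additivity whenever the sum is legal. -/
def IsLinExt {E : Type*} [AddCommGroup E] [Module ℝ E] (f : E → EReal) : Prop :=
  (∀ (α : ℝ) (x : E), f (α • x) = (α : EReal) * f x) ∧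
  (∀ x x' : E, ¬ ((f x = ⊤ ∧ f x' = ⊥) ∨ (f x = ⊥ ∧ f x' = ⊤)) →
    f (x + x') = f x + f x')

/-- An *affine extended function*: a horizontally and vertically shifted linear extended fn. -/
def IsAffExt {E : Type*} [AddCommGroup E] [Module ℝ E] (h : E → EReal) : Prop :=
  ∃ (f : E → EReal) (x₀ : E) (β : ℝ), IsLinExt f ∧ ∀ x, h x = f (x - x₀) + (β : EReal)

theorem stmt_4 (d : ℕ) (f : (Fin d → ℝ) → EReal)
    (hconeTop : ∀ x x' : Fin d → ℝ, f x = ⊤ → f x' = ⊤ →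
      ∀ α β : ℝ, 0 < α → 0 < β → f (α • x + β • x') = ⊤)
    (hconeBot : ∀ x x' : Fin d → ℝ, f x = ⊥ → f x' = ⊥ →
      ∀ α β : ℝ, 0 < α → 0 < β → f (α • x + β • x') = ⊥)
    (hneg : ∀ x : Fin d → ℝ, f x = ⊤ ↔ f (-x) = ⊥)
    (F : Submodule ℝ (Fin d → ℝ))
    (hF : ∀ x, x ∈ F ↔ (f x ≠ ⊤ ∧ f x ≠ ⊥))
    (l : F →ₗ[ℝ] ℝ) (hl : ∀ x : F, f (x : Fin d → ℝ) = ((l x : ℝ) : EReal)) :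
    IsLinExt f := by
  have hf0 : f 0 = 0 := by
    have h := hl 0
    simpa using h
  have hbotneg : ∀ x, f x = ⊥ → f (-x) = ⊤ := by
    intro x h
    rw [hneg, neg_neg]; exact h
  have hnegbot : ∀ x, f (-x) = ⊥ → f x = ⊤ := fun x h => (hneg x).2 h
  -- finite case scaling for all α
  have hfin : ∀ x (hx : x ∈ F), ∀ α : ℝ, f (α • x) = (α : EReal) * f x := by
    intro x hx α
    have hax : α • x ∈ F := F.smul_mem α hx
    have h1 := hl ⟨x, hx⟩
    have h2 := hl ⟨α • x, hax⟩
    have h3 : (⟨α • x, hax⟩ : F) = α • (⟨x, hx⟩ : F) := rfl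
    rw [h2, h1, h3, map_smul]
    simp [EReal.coe_mul]
  have htop_smul : ∀ x, f x = ⊤ → ∀ α : ℝ, 0 < α → f (α • x) = ⊤ := by
    intro x ht α hα
    have h := hconeTop x x ht ht (α/2) (α/2) (by linarith) (by linarith)
    rwa [show (α/2) • x + (α/2) • x = α • x from by rw [← add_smul]; ring_nf] at h
  have hbot_smul : ∀ x, f x = ⊥ → ∀ α : ℝ, 0 < α → f (α • x) = ⊥ := by
    intro x ht α hα
    have h := hconeBot x x ht ht (α/2) (α/2) (by linarith) (by linarith)
    rwa [show (α/2) • x + (α/2) • x = α • x from by rw [← add_smul]; ring_nf] at h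
  constructor
  · intro α x
    by_cases ht : f x = ⊤
    · rcases lt_trichotomy α 0 with h | h | h
      · have hnx : f (-x) = ⊥ := (hneg x).1 ht
        have : f ((-α) • (-x)) = ⊥ := hbot_smul _ hnx (-α) (by linarith)
        rw [show α • x = (-α) • (-x) from by simp, this, ht,
          EReal.coe_mul_top_of_neg h]
      · subst h; simpa using hf0
      · rw [htop_smul x ht α h, ht, EReal.coe_mul_top_of_pos h]
    · by_cases hb : f x = ⊥
      · rcases lt_trichotomy α 0 with h | h | h
        · have hnx : f (-x) = ⊤ := hbotneg x hb
          have : f ((-α) • (-x)) = ⊤ := htop_smul _ hnx (-α) (by linarith)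
          rw [show α • x = (-α) • (-x) from by simp, this, hb,
            EReal.coe_mul_bot_of_neg h]
        · subst h; simpa using hf0
        · rw [hbot_smul x hb α h, hb, EReal.coe_mul_bot_of_pos h]
      · exact hfin x ((hF x).2 ⟨ht, hb⟩) α
  · -- additivity
    have htop_add_fin : ∀ x y, f x = ⊤ → y ∈ F → f (x + y) = ⊤ := by
      intro x y ht hy
      by_contra h
      by_cases hb : f (x + y) = ⊥
      · have h1 : f (-(x + y)) = ⊤ := hbotneg _ hb
        have h2 := hconeTop _ _ h1 ht 1 1 one_pos one_pos
        rw [one_smul, one_smul, show -(x + y) + x = -y from by abel] at h2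
        exact ((hF (-y)).1 (F.neg_mem hy)).1 h2
      · have hxy : x + y ∈ F := (hF _).2 ⟨h, hb⟩
        have hx : x ∈ F := by
          have := F.sub_mem hxy hy
          simpa using this
        exact ((hF x).1 hx).1 ht
    have hbot_add_fin : ∀ x y, f x = ⊥ → y ∈ F → f (x + y) = ⊥ := by
      intro x y hb hy
      have h1 : f (-x) = ⊤ := hbotneg _ hb
      have h2 : f (-x + -y) = ⊤ := htop_add_fin _ _ h1 (F.neg_mem hy)
      have h3 : f (-(x + y)) = ⊤ := by rwa [show -(x+y) = -x + -y from by abel]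
      have h4 := (hneg (-(x + y))).1 h3
      rwa [neg_neg] at h4
    intro x x' hne
    by_cases ht : f x = ⊤
    · by_cases ht' : f x' = ⊤
      · have h := hconeTop x x' ht ht' 1 1 one_pos one_pos
        rw [one_smul, one_smul] at h
        rw [h, ht, ht']; rfl
      · have hb' : f x' ≠ ⊥ := fun hb => hne (Or.inl ⟨ht, hb⟩)
        have hx' : x' ∈ F := (hF x').2 ⟨ht', hb'⟩
        rw [htop_add_fin x x' ht hx', ht, hl ⟨x', hx'⟩, EReal.top_add_coe]
    · by_cases hb : f x = ⊥
      · by_cases hb' : f x' = ⊥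
        · have h := hconeBot x x' hb hb' 1 1 one_pos one_pos
          rw [one_smul, one_smul] at h
          rw [h, hb, hb']; rfl
        · have ht' : f x' ≠ ⊤ := fun h => hne (Or.inr ⟨hb, h⟩)
          have hx' : x' ∈ F := (hF x').2 ⟨ht', hb'⟩
          rw [hbot_add_fin x x' hb hx', hb, hl ⟨x', hx'⟩, EReal.bot_add]
      · have hx : x ∈ F := (hF x).2 ⟨ht, hb⟩
        by_cases ht' : f x' = ⊤
        · rw [show x + x' = x' + x from by abel, htop_add_fin x' x ht' hx, ht',
            hl ⟨x, hx⟩, EReal.coe_add_top]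
        · by_cases hb' : f x' = ⊥
          · rw [show x + x' = x' + x from by abel, hbot_add_fin x' x hb' hx, hb',
              hl ⟨x, hx⟩, EReal.add_bot]
          · have hx' : x' ∈ F := (hF x').2 ⟨ht', hb'⟩
            have hxx' : x + x' ∈ F := F.add_mem hx hx'
            have : (⟨x + x', hxx'⟩ : F) = ⟨x, hx⟩ + ⟨x', hx'⟩ := rfl
            rw [hl ⟨x + x', hxx'⟩, hl ⟨x, hx⟩, hl ⟨x', hx'⟩, this, map_add,
              EReal.coe_add]
end

section
/- Let v₁ ∈ ℝᵈ be a unit vector and let f₂ be a linear extended function on the subspace {x : v₁ · x = 0}. Define f : ℝᵈ → ℝ̄ by f(x) = +∞ if v₁·x > 0, f(x) = -∞ if v₁·x < 0, and f(x) = f₂(x) if v₁·x = 0. Then f is a linear extended function on ℝᵈ. -/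
section SignExtend

variable {E : Type*} [AddCommGroup E] [Module ℝ E] (φ : E →ₗ[ℝ] ℝ) (g : E → EReal)

noncomputable def signExtend (x : E) : EReal :=
  if 0 < φ x then ⊤ else if φ x < 0 then ⊥ else g x

variable {φ g} {x x' : E}

theorem signExtend_of_pos (h : 0 < φ x) : signExtend φ g x = ⊤ := if_pos h

theorem signExtend_of_neg (h : φ x < 0) : signExtend φ g x = ⊥ := by
  rw [signExtend, if_neg h.not_gt, if_pos h]

theorem signExtend_of_eq_zero (h : φ x = 0) : signExtend φ g x = g x := by
  rw [signExtend, if_neg h.not_gt, if_neg h.not_lt]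

theorem signExtend_zero (hg : ∀ (α : ℝ) y, φ y = 0 → g (α • y) = α * g y) :
    signExtend φ g 0 = 0 := by
  rw [signExtend_of_eq_zero (map_zero φ)]
  simpa using hg 0 0 (map_zero φ)

theorem signExtend_smul (hg : ∀ (α : ℝ) y, φ y = 0 → g (α • y) = α * g y) (α : ℝ) :
    signExtend φ g (α • x) = α * signExtend φ g x := by
  have hφ : φ (α • x) = α * φ x := by simp
  rcases lt_trichotomy α 0 with hα | rfl | hα
  · rcases lt_trichotomy (φ x) 0 with h | h | h
    · rw [signExtend_of_pos (hφ ▸ mul_pos_of_neg_of_neg hα h), signExtend_of_neg h,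
        EReal.coe_mul_bot_of_neg hα]
    · rw [signExtend_of_eq_zero h, signExtend_of_eq_zero (by simp [h]), hg α x h]
    · rw [signExtend_of_neg (hφ ▸ mul_neg_of_neg_of_pos hα h), signExtend_of_pos h,
        EReal.coe_mul_top_of_neg hα]
  · rw [zero_smul, EReal.coe_zero, zero_mul, signExtend_zero hg]
  · rcases lt_trichotomy (φ x) 0 with h | h | h
    · rw [signExtend_of_neg (hφ ▸ mul_neg_of_pos_of_neg hα h), signExtend_of_neg h,
        EReal.coe_mul_bot_of_pos hα]
    · rw [signExtend_of_eq_zero h, signExtend_of_eq_zero (by simp [h]), hg α x h]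
    · rw [signExtend_of_pos (hφ ▸ mul_pos hα h), signExtend_of_pos h,
        EReal.coe_mul_top_of_pos hα]

theorem signExtend_add
    (hg : ∀ y y', φ y = 0 → φ y' = 0 → ¬((g y = ⊤ ∧ g y' = ⊥) ∨ (g y = ⊥ ∧ g y' = ⊤)) →
      g (y + y') = g y + g y')
    (hlegal : ¬((signExtend φ g x = ⊤ ∧ signExtend φ g x' = ⊥) ∨
      (signExtend φ g x = ⊥ ∧ signExtend φ g x' = ⊤))) :
    signExtend φ g (x + x') = signExtend φ g x + signExtend φ g x' := by
  have hφ : φ (x + x') = φ x + φ x' := map_add φ x x'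
  rcases lt_trichotomy (φ x) 0 with h | h | h <;> rcases lt_trichotomy (φ x') 0 with h' | h' | h'
  · rw [signExtend_of_neg (by linarith), signExtend_of_neg h, EReal.bot_add]
  · rw [signExtend_of_neg (by linarith), signExtend_of_neg h, EReal.bot_add]
  · exact absurd (Or.inr ⟨signExtend_of_neg h, signExtend_of_pos h'⟩) hlegal
  · rw [signExtend_of_neg (by linarith), signExtend_of_neg h', EReal.add_bot]
  · rw [signExtend_of_eq_zero h, signExtend_of_eq_zero h'] at hlegal ⊢
    rw [signExtend_of_eq_zero (by linarith)]
    exact hg x x' h h' hlegal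
  · rw [signExtend_of_pos (by linarith), signExtend_of_pos h', EReal.add_top_of_ne_bot]
    exact fun hbot => hlegal (Or.inr ⟨hbot, signExtend_of_pos h'⟩)
  · exact absurd (Or.inl ⟨signExtend_of_pos h, signExtend_of_neg h'⟩) hlegal
  · rw [signExtend_of_pos (by linarith), signExtend_of_pos h, EReal.top_add_of_ne_bot]
    exact fun hbot => hlegal (Or.inl ⟨signExtend_of_pos h, hbot⟩)
  · rw [signExtend_of_pos (by linarith), signExtend_of_pos h, signExtend_of_pos h',
      EReal.top_add_top]

theorem isLinExt_signExtend (hg_smul : ∀ (α : ℝ) y, φ y = 0 → g (α • y) = α * g y)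
    (hg_add : ∀ y y', φ y = 0 → φ y' = 0 →
      ¬((g y = ⊤ ∧ g y' = ⊥) ∨ (g y = ⊥ ∧ g y' = ⊤)) → g (y + y') = g y + g y') :
    IsLinExt (signExtend φ g) :=
  ⟨fun α _ => signExtend_smul hg_smul α, fun _ _ => signExtend_add hg_add⟩

end SignExtend

theorem stmt_5_general (d : ℕ) (v₁ : EuclideanSpace ℝ (Fin d))
    (f₂ f : EuclideanSpace ℝ (Fin d) → EReal)
    (hf₂scale : ∀ (α : ℝ) (x : EuclideanSpace ℝ (Fin d)), (inner ℝ v₁ x : ℝ) = 0 →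
      f₂ (α • x) = (α : EReal) * f₂ x)
    (hf₂add : ∀ x x' : EuclideanSpace ℝ (Fin d),
      (inner ℝ v₁ x : ℝ) = 0 → (inner ℝ v₁ x' : ℝ) = 0 →
      ¬ ((f₂ x = ⊤ ∧ f₂ x' = ⊥) ∨ (f₂ x = ⊥ ∧ f₂ x' = ⊤)) →
      f₂ (x + x') = f₂ x + f₂ x')
    (hf : ∀ x, f x = if 0 < (inner ℝ v₁ x : ℝ) then (⊤ : EReal)
                     else if (inner ℝ v₁ x : ℝ) < 0 then (⊥ : EReal) else f₂ x) :
    IsLinExt f := by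
  rw [show f = signExtend (innerₗ _ v₁) f₂ from funext hf]
  exact isLinExt_signExtend hf₂scale hf₂add

theorem stmt_5 (d : ℕ) (v₁ : EuclideanSpace ℝ (Fin d)) (hv : ‖v₁‖ = 1)
    (f₂ f : EuclideanSpace ℝ (Fin d) → EReal)
    (hf₂scale : ∀ (α : ℝ) (x : EuclideanSpace ℝ (Fin d)), (inner ℝ v₁ x : ℝ) = 0 →
      f₂ (α • x) = (α : EReal) * f₂ x)
    (hf₂add : ∀ x x' : EuclideanSpace ℝ (Fin d),
      (inner ℝ v₁ x : ℝ) = 0 → (inner ℝ v₁ x' : ℝ) = 0 →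
      ¬ ((f₂ x = ⊤ ∧ f₂ x' = ⊥) ∨ (f₂ x = ⊥ ∧ f₂ x' = ⊤)) →
      f₂ (x + x') = f₂ x + f₂ x')
    (hf : ∀ x, f x = if 0 < (inner ℝ v₁ x : ℝ) then (⊤ : EReal)
                     else if (inner ℝ v₁ x : ℝ) < 0 then (⊥ : EReal) else f₂ x) :
    IsLinExt f :=
  stmt_5_general d v₁ f₂ f hf₂scale hf₂add hf
end

section
/- If f : ℝᵈ → ℝ̄ (d ≥ 1) is a linear extended function that is not everywhere finite, then there exists a unit vector v₁ ∈ ℝᵈ such that f(x) = +∞ whenever v₁·x > 0 and f(x) = -∞ whenever v₁·x < 0. -/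
/-!
The set `{x | f x ≠ ⊤}` is a pointed convex cone, and it is proper because `f (-x) = -f x`
forces `f` to take the value `⊤` somewhere. In finite dimension a proper convex set is not dense,
so Farkas' lemma applied to the closure of the cone puts it in a half-space `{⟪v, ·⟫ ≤ 0}`.
Hence `f = ⊤` where `⟪v, ·⟫ > 0`, and by oddness `f = ⊥` where `⟪v, ·⟫ < 0`.
-/

open scoped RealInnerProductSpace

theorem Convex.eq_univ_of_dense {V : Type*} [NormedAddCommGroup V] [NormedSpace ℝ V]
    [FiniteDimensional ℝ V] {s : Set V} (hs : Convex ℝ s) (hd : Dense s) : s = Set.univ := by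
  have hspan : affineSpan ℝ s = ⊤ := by
    refine AffineSubspace.coe_eq_univ_iff _ |>.1 (Set.eq_univ_of_univ_subset ?_)
    rw [← hd.closure_eq]
    exact closure_minimal (subset_affineSpan ℝ s) (affineSpan ℝ s).closed_of_finiteDimensional
  have hint := hs.interior_closure_eq_interior_of_nonempty_interior
    (hs.interior_nonempty_iff_affineSpan_eq_top.2 hspan)
  rw [hd.closure_eq, interior_univ] at hint
  exact Set.eq_univ_of_univ_subset (hint ▸ interior_subset)

theorem PointedCone.exists_norm_eq_one_inner_nonpos_of_ne_top {E : Type*}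
    [NormedAddCommGroup E] [InnerProductSpace ℝ E] [FiniteDimensional ℝ E]
    {K : PointedCone ℝ E} (hK : K ≠ ⊤) : ∃ v : E, ‖v‖ = 1 ∧ ∀ x ∈ K, ⟪v, x⟫ ≤ 0 := by
  obtain ⟨b, hb⟩ : ∃ b, b ∉ Submodule.closure K := by
    by_contra! h
    exact hK (SetLike.coe_injective (K.convex.eq_univ_of_dense h))
  obtain ⟨y, hKy, hby⟩ := ProperCone.hyperplane_separation' _ hb
  have hy : y ≠ 0 := by
    rintro rfl
    simp at hby
  refine ⟨-‖y‖⁻¹ • y, ?_, fun x hx ↦ ?_⟩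
  · rw [norm_smul, norm_neg, norm_inv, norm_norm, inv_mul_cancel₀ (norm_ne_zero_iff.2 hy)]
  · rw [real_inner_smul_left, real_inner_comm, neg_mul, neg_nonpos]
    exact mul_nonneg (by positivity) (hKy x (subset_closure hx))

namespace IsLinExt

section Module

variable {E : Type*} [AddCommGroup E] [Module ℝ E] {f : E → EReal}

theorem map_zero (hf : IsLinExt f) : f 0 = 0 := by
  simpa using hf.1 0 0

theorem map_neg (hf : IsLinExt f) (x : E) : f (-x) = -f x := by
  simpa using hf.1 (-1) x

theorem exists_eq_top (hf : IsLinExt f) (h : ∃ x, f x = ⊤ ∨ f x = ⊥) : ∃ x, f x = ⊤ := by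
  obtain ⟨x, hx | hx⟩ := h
  · exact ⟨x, hx⟩
  · exact ⟨-x, by rw [hf.map_neg, hx, EReal.neg_bot]⟩

def neTopCone (hf : IsLinExt f) : PointedCone ℝ E where
  carrier := {x | f x ≠ ⊤}
  zero_mem' := by simp [hf.map_zero]
  add_mem' {x y} hx hy := by
    simp only [Set.mem_ofPred_eq] at hx hy ⊢
    rw [hf.2 x y (by tauto)]
    exact (EReal.add_lt_top hx hy).ne
  smul_mem' c x hx := by
    simp only [Set.mem_ofPred_eq] at hx ⊢
    rw [Nonneg.mk_smul, hf.1]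
    exact (EReal.mul_ne_top _ _).2 ⟨.inl (EReal.coe_ne_bot _), .inl (EReal.coe_nonneg.2 c.2),
      .inl (EReal.coe_ne_top _), .inr hx⟩

end Module

theorem exists_norm_eq_one_eq_top_of_inner_pos_eq_bot_of_inner_neg {E : Type*}
    [NormedAddCommGroup E] [InnerProductSpace ℝ E] [FiniteDimensional ℝ E] {f : E → EReal}
    (hf : IsLinExt f) (h : ∃ x, f x = ⊤ ∨ f x = ⊥) :
    ∃ v : E, ‖v‖ = 1 ∧ ∀ x, (0 < ⟪v, x⟫ → f x = ⊤) ∧ (⟪v, x⟫ < 0 → f x = ⊥) := by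
  obtain ⟨x₀, hx₀⟩ := hf.exists_eq_top h
  have hK : hf.neTopCone ≠ ⊤ := fun hK ↦ (hK ▸ Submodule.mem_top : x₀ ∈ hf.neTopCone) hx₀
  obtain ⟨v, hv, hvK⟩ := PointedCone.exists_norm_eq_one_inner_nonpos_of_ne_top hK
  have hpos (x : E) (hx : 0 < ⟪v, x⟫) : f x = ⊤ := by
    by_contra hfx
    exact (hvK x hfx).not_gt hx
  refine ⟨v, hv, fun x ↦ ⟨hpos x, fun hx ↦ ?_⟩⟩
  rw [← EReal.neg_eq_top_iff, ← hf.map_neg]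
  exact hpos (-x) (by rwa [inner_neg_right, neg_pos])

end IsLinExt

theorem stmt_6_general (d : ℕ) (f : EuclideanSpace ℝ (Fin d) → EReal)
    (hf : IsLinExt f) (hnotfin : ∃ x, f x = ⊤ ∨ f x = ⊥) :
    ∃ v₁ : EuclideanSpace ℝ (Fin d), ‖v₁‖ = 1 ∧
      ∀ x, (0 < (inner ℝ v₁ x : ℝ) → f x = ⊤) ∧ ((inner ℝ v₁ x : ℝ) < 0 → f x = ⊥) :=
  hf.exists_norm_eq_one_eq_top_of_inner_pos_eq_bot_of_inner_neg hnotfin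

theorem stmt_6 (d : ℕ) (hd : 1 ≤ d) (f : EuclideanSpace ℝ (Fin d) → EReal)
    (hf : IsLinExt f) (hnotfin : ∃ x, f x = ⊤ ∨ f x = ⊥) :
    ∃ v₁ : EuclideanSpace ℝ (Fin d), ‖v₁‖ = 1 ∧
      ∀ x, (0 < (inner ℝ v₁ x : ℝ) → f x = ⊤) ∧ ((inner ℝ v₁ x : ℝ) < 0 → f x = ⊥) :=
  stmt_6_general d f hf hnotfin
end

section
/- Let g : ℝᵈ → ℝ ∪ {+∞} be convex with g(0) = 0. Then there exists a linear extended function f : ℝᵈ → ℝ̄ with f(z) ≤ g(z) for all z ∈ ℝᵈ. -/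
/-! Real linear functionals, read as `EReal`-valued maps, satisfy the identities defining
linear extended functions, and these identities cut out a closed subset of the compact space
`E → EReal`. Hence a cluster point of real linear functionals `ℓ` with `ℓ ≤ g + ε` on larger and
larger finite sets, as `ε → 0`, is a linear extended minorant of `g`. Such an `ℓ` comes from
strictly separating `(0, -ε)` from the closed convex set `conv P + {0} × [0, ∞)`, `P` a finite
subset of the epigraph of `g`; it misses `(0, -ε)` because `g 0 ≥ 0`. -/

open Filter Set Topology
open scoped Pointwise

lemma isClosed_setOf_eq_add :
    IsClosed {p : EReal × EReal × EReal |
      ¬((p.2.1 = ⊤ ∧ p.2.2 = ⊥) ∨ (p.2.1 = ⊥ ∧ p.2.2 = ⊤)) → p.1 = p.2.1 + p.2.2} := by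
  set U : Set (EReal × EReal) := {(⊤, ⊥), (⊥, ⊤)}ᶜ
  have hadd : ContinuousOn (fun p : EReal × EReal × EReal ↦ (p.1, p.2.1 + p.2.2)) (univ ×ˢ U) := by
    rintro ⟨a, b, c⟩ ⟨-, hbc⟩
    simp only [U, mem_compl_iff, mem_insert_iff, mem_singleton_iff, Prod.mk.injEq, not_or] at hbc
    refine (continuousAt_fst.prodMk ((EReal.continuousAt_add ?_ ?_).comp
      continuousAt_snd)).continuousWithinAt <;> tauto
  have hopen := hadd.isOpen_inter_preimage (isOpen_univ.prod (toFinite _).isClosed.isOpen_compl)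
    (isOpen_ne_fun continuous_fst continuous_snd)
  rw [← isOpen_compl_iff]
  convert hopen using 1
  ext ⟨a, b, c⟩
  simp [U]
  tauto

lemma EReal.continuous_coe_mul (α : ℝ) : Continuous fun b : EReal ↦ (α : EReal) * b := by
  rcases eq_or_ne α 0 with rfl | hα
  · simpa using continuous_const
  have hα' : (α : EReal) ≠ 0 := by exact_mod_cast hα
  refine continuous_iff_continuousAt.2 fun b ↦
    (EReal.continuousAt_mul (.inl hα') (.inl hα') (.inl (EReal.coe_ne_bot α))
      (.inl (EReal.coe_ne_top α))).comp (continuous_const.prodMk continuous_id).continuousAt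

lemma EReal.le_of_forall_pos_le_add_coe {a b : EReal} (h : ∀ ε : ℝ, 0 < ε → a ≤ b + ε) :
    a ≤ b := by
  induction b using EReal.rec with
  | bot => simpa using h 1 one_pos
  | top => exact le_top
  | coe r =>
    refine EReal.le_of_forall_lt_iff_le.1 fun w hw ↦ ?_
    have hrw : r < w := by exact_mod_cast hw
    have := h (w - r) (by linarith)
    rwa [← EReal.coe_add, add_sub_cancel] at this

section LinExt

variable {E : Type*} [AddCommGroup E] [Module ℝ E]

lemma isClosed_setOf_isLinExt : IsClosed {f : E → EReal | IsLinExt f} := by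
  simp only [IsLinExt, ofPred_and, ofPred_forall]
  exact .inter
    (isClosed_iInter fun α ↦ isClosed_iInter fun x ↦ isClosed_eq (continuous_apply _)
      ((EReal.continuous_coe_mul α).comp (continuous_apply x)))
    (isClosed_iInter fun x ↦ isClosed_iInter fun x' ↦ isClosed_setOf_eq_add.preimage
      (show Continuous fun f : E → EReal ↦ (f (x + x'), f x, f x') by fun_prop))

lemma LinearMap.isLinExt_coe (ℓ : E →ₗ[ℝ] ℝ) : IsLinExt fun x ↦ (ℓ x : EReal) :=
  ⟨fun α x ↦ by dsimp only; rw [map_smul, smul_eq_mul, EReal.coe_mul],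
    fun x x' _ ↦ by dsimp only; rw [map_add, EReal.coe_add]⟩

theorem exists_isLinExt_le_of_forall_exists_linearMap (g : E → EReal)
    (h : ∀ (s : Finset E) (ε : ℝ), 0 < ε → ∃ ℓ : E →ₗ[ℝ] ℝ, ∀ z ∈ s, (ℓ z : EReal) ≤ g z + ε) :
    ∃ f : E → EReal, IsLinExt f ∧ ∀ z, f z ≤ g z := by
  have h' : ∀ p : Finset E × ℝ, ∃ ℓ : E →ₗ[ℝ] ℝ,
      0 < p.2 → ∀ z ∈ p.1, (ℓ z : EReal) ≤ g z + p.2 := by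
    rintro ⟨s, ε⟩
    by_cases hε : 0 < ε
    · exact (h s ε hε).imp fun _ hℓ _ ↦ hℓ
    · exact ⟨0, fun h ↦ absurd h hε⟩
  choose ℓ hℓ using h'
  obtain ⟨f, hf⟩ := exists_clusterPt_of_compactSpace
    (map (fun p z ↦ (ℓ p z : EReal)) (atTop ×ˢ 𝓝[>] 0))
  have hmem : ∀ S, IsClosed S → S ∈ map (fun p z ↦ (ℓ p z : EReal)) (atTop ×ˢ 𝓝[>] 0) → f ∈ S :=
    fun S hS hSF ↦ hS.closure_eq ▸ hf.mem_closure_of_mem (s := S) hSF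
  refine ⟨f, hmem _ isClosed_setOf_isLinExt (mem_map.2 (univ_mem' fun p ↦ (ℓ p).isLinExt_coe)),
    fun z ↦ EReal.le_of_forall_pos_le_add_coe fun ε hε ↦ ?_⟩
  refine hmem {f | f z ≤ g z + ε} (isClosed_le (continuous_apply z) continuous_const) (mem_map.2 ?_)
  filter_upwards [prod_mem_prod (eventually_ge_atTop {z}) (Ioo_mem_nhdsGT hε)]
    with ⟨s, ε'⟩ ⟨hzs, hε'⟩
  refine (hℓ (s, ε') hε'.1 z (Finset.singleton_subset_iff.1 hzs)).trans ?_
  gcongr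
  exact hε'.2.le

end LinExt

theorem exists_mul_le_add_of_lt_add_mul {ι : Type*} (s : Finset ι) (a r : ι → ℝ) {γ u ε : ℝ}
    (hγ : 0 ≤ γ) (hu : u < γ * ε) (h : ∀ i ∈ s, a i < u + γ * r i) :
    ∃ c : ℝ, ∀ i ∈ s, c * a i ≤ r i + ε := by
  have hδ : ∀ᶠ δ in 𝓝[>] (0 : ℝ), 0 < δ ∧ ∀ i ∈ s, u - γ * ε ≤ δ * (r i + ε) := by
    refine (eventually_mem_nhdsWithin (a := (0 : ℝ)) (s := Ioi 0)).and
      ((Finset.eventually_all s).2 fun i _ ↦ ?_)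
    have : Tendsto (fun δ : ℝ ↦ δ * (r i + ε)) (𝓝[>] 0) (𝓝 0) := by
      simpa using tendsto_nhdsWithin_of_tendsto_nhds ((continuous_mul_const (r i + ε)).tendsto 0)
    exact this.eventually (eventually_ge_nhds (by linarith))
  obtain ⟨δ, hδ0, hδ⟩ := hδ.exists
  -- `δ > 0` takes care of the vertical case `γ = 0`.
  refine ⟨(γ + δ)⁻¹, fun i hi ↦ ?_⟩
  rw [inv_mul_le_iff₀ (by positivity)]
  nlinarith [h i hi, hδ i hi]

section Separation

variable {E : Type*} [NormedAddCommGroup E] [NormedSpace ℝ E]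

theorem exists_linearMap_le_add_of_convex {S : Set (E × ℝ)} (hS : Convex ℝ S)
    (hS0 : ∀ r, ((0 : E), r) ∈ S → 0 ≤ r) (P : Finset (E × ℝ)) (hPS : ↑P ⊆ S) {ε : ℝ}
    (hε : 0 < ε) : ∃ ℓ : E →ₗ[ℝ] ℝ, ∀ p ∈ P, ℓ p.1 ≤ p.2 + ε := by
  rcases P.eq_empty_or_nonempty with rfl | ⟨p₀, hp₀⟩
  · exact ⟨0, by simp⟩
  set C : Set (E × ℝ) := convexHull ℝ (P : Set (E × ℝ)) + ({(0 : E)} ×ˢ Ici (0 : ℝ))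
  have hC : IsClosed C := (isClosed_singleton.prod isClosed_Ici).add_left_of_isCompact
    (P.finite_toSet.isCompact_convexHull (𝕜 := ℝ))
  have hCconv : Convex ℝ C := (convex_convexHull ℝ _).add ((convex_singleton _).prod (convex_Ici _))
  have hmemC : ∀ p ∈ P, ∀ t : ℝ, 0 ≤ t → p + (0, t) ∈ C := fun p hp t ht ↦
    add_mem_add (subset_convexHull ℝ _ hp) ⟨rfl, ht⟩
  have hnotC : ((0 : E), -ε) ∉ C := by
    rintro ⟨⟨k₁, k₂⟩, hk, ⟨q₁, q₂⟩, ⟨rfl, hq₂⟩, hkq⟩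
    simp only [Prod.mk_add_mk, Prod.mk.injEq, add_zero] at hkq
    obtain ⟨rfl, hkq⟩ := hkq
    linarith [hS0 k₂ (convexHull_min hPS hS hk), mem_Ici.1 hq₂]
  obtain ⟨ψ, u, hψC, huψ⟩ := geometric_hahn_banach_closed_point hCconv hC hnotC
  set φ : E →ₗ[ℝ] ℝ := (ψ : E × ℝ →ₗ[ℝ] ℝ).comp (LinearMap.inl ℝ E ℝ)
  set β := ψ (0, 1)
  have hψ : ∀ z r, ψ (z, r) = φ z + r * β := fun z r ↦ by
    have : (z, r) = (z, 0) + r • ((0 : E), (1 : ℝ)) := by simp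
    rw [this, map_add, map_smul, smul_eq_mul]
    rfl
  -- `ψ` is bounded above on the upward ray from `p₀`.
  have hβ : β ≤ 0 := by
    by_contra! hβ
    have := hψC _ (hmemC p₀ hp₀ (|u - ψ p₀| / β) (by positivity))
    rw [map_add, hψ 0, map_zero, zero_add, div_mul_cancel₀ _ hβ.ne'] at this
    linarith [le_abs_self (u - ψ p₀)]
  have hu : u < -β * ε := by
    rw [hψ, map_zero] at huψ
    linarith
  have hP : ∀ p ∈ P, φ p.1 < u + -β * p.2 := by
    rintro ⟨z, r⟩ hp
    have := hψC _ (by simpa using hmemC _ hp 0 le_rfl)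
    rw [hψ] at this
    linarith
  obtain ⟨c, hc⟩ := exists_mul_le_add_of_lt_add_mul P _ _ (neg_nonneg.2 hβ) hu hP
  exact ⟨c • φ, hc⟩

theorem exists_linearMap_le_add {g : E → EReal} (hbot : ∀ x, g x ≠ ⊥)
    (hconv : Convex ℝ {p : E × ℝ | g p.1 ≤ (p.2 : EReal)}) (h0 : 0 ≤ g 0) (s : Finset E)
    {ε : ℝ} (hε : 0 < ε) : ∃ ℓ : E →ₗ[ℝ] ℝ, ∀ z ∈ s, (ℓ z : EReal) ≤ g z + ε := by
  classical
  set P := {z ∈ s | g z ≠ ⊤}.image fun z ↦ (z, (g z).toReal)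
  have hPS : ↑P ⊆ {p : E × ℝ | g p.1 ≤ (p.2 : EReal)} := by
    simp only [P, Finset.coe_image, Finset.coe_filter, image_subset_iff]
    intro z hz
    simp [EReal.coe_toReal hz.2 (hbot z)]
  obtain ⟨ℓ, hℓ⟩ := exists_linearMap_le_add_of_convex hconv
    (fun r hr ↦ EReal.coe_nonneg.1 (h0.trans hr)) P hPS hε
  refine ⟨ℓ, fun z hz ↦ ?_⟩
  by_cases htop : g z = ⊤
  · simp [htop]
  · rw [← EReal.coe_toReal htop (hbot z)]
    exact_mod_cast hℓ _ (Finset.mem_image_of_mem _ (Finset.mem_filter.2 ⟨hz, htop⟩))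

end Separation

theorem stmt_8 (d : ℕ) (g : (Fin d → ℝ) → EReal) (hbot : ∀ x, g x ≠ ⊥)
    (hconv : Convex ℝ {p : (Fin d → ℝ) × ℝ | g p.1 ≤ (p.2 : EReal)})
    (h0 : g 0 = 0) :
    ∃ f : (Fin d → ℝ) → EReal, IsLinExt f ∧ ∀ z, f z ≤ g z :=
  exists_isLinExt_le_of_forall_exists_linearMap g fun s _ hε ↦
    exists_linearMap_le_add hbot hconv h0.ge s hε
end

section
/- Let G ⊆ ℝᵈ be convex and x ∉ G. Then there is a family H of affine extended functions on ℝᵈ such that sup_{h ∈ H} h(x) = +∞ while h(x') = -∞ for every h ∈ H and every x' ∈ G. -/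
section Aux

variable {E : Type*} [AddCommGroup E] [Module ℝ E]

/-- A convex cone (no zero) which is disjoint from its negation. -/
def GoodCone (S : Set E) : Prop :=
  (∀ x ∈ S, ∀ y ∈ S, x + y ∈ S) ∧
  (∀ x ∈ S, ∀ a : ℝ, 0 < a → a • x ∈ S) ∧
  (∀ x ∈ S, -x ∉ S)

lemma goodCone_zero_not_mem {S : Set E} (hS : GoodCone S) : (0 : E) ∉ S := by
  intro h0
  exact hS.2.2 0 h0 (by simpa using h0)

lemma exists_maximal_goodCone (K : Set E) (hK : GoodCone K) :
    ∃ M : Set E, K ⊆ M ∧ GoodCone M ∧ ∀ y : E, y ≠ 0 → y ∈ M ∨ -y ∈ M := by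
  obtain ⟨M, hKM, hMmem, hMmax⟩ :
      ∃ M, K ⊆ M ∧ GoodCone M ∧ ∀ S, GoodCone S → M ⊆ S → S = M := by
    obtain ⟨M, hKM, hMmax⟩ := zorn_subset_nonempty {S : Set E | GoodCone S}
      (fun c hc hchain hcne => by
        refine ⟨⋃₀ c, ⟨?_, ?_, ?_⟩, fun s hs => Set.subset_sUnion_of_mem hs⟩
        · rintro a ⟨s, hs, has⟩ b ⟨t, ht, hbt⟩
          rcases hchain.total hs ht with h | h
          · exact ⟨t, ht, (hc ht).1 a (h has) b hbt⟩
          · exact ⟨s, hs, (hc hs).1 a has b (h hbt)⟩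
        · rintro a ⟨s, hs, has⟩ r hr
          exact ⟨s, hs, (hc hs).2.1 a has r hr⟩
        · rintro a ⟨s, hs, has⟩ ⟨t, ht, hat⟩
          rcases hchain.total hs ht with h | h
          · exact (hc ht).2.2 a (h has) hat
          · exact (hc hs).2.2 a has (h hat)) K hK
    exact ⟨M, hKM, hMmax.prop, fun S hS hMS => (hMmax.eq_of_le hS hMS).symm⟩
  refine ⟨M, hKM, hMmem, fun y hy0 => ?_⟩
  by_contra hcon
  push_neg at hcon
  obtain ⟨hyM, hnyM⟩ := hcon
  -- enlarge M by y and contradict maximality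
  set M' : Set E := {z | z ≠ 0 ∧ ∃ m : E, ∃ t : ℝ, (m ∈ M ∨ m = 0) ∧ 0 ≤ t ∧ z = m + t • y}
    with hM'def
  have hadd0 : ∀ m m' : E, (m ∈ M ∨ m = 0) → (m' ∈ M ∨ m' = 0) → (m + m' ∈ M ∨ m + m' = 0) := by
    rintro m m' (hm | rfl) (hm' | rfl)
    · exact Or.inl (hMmem.1 m hm m' hm')
    · simpa using Or.inl hm
    · simpa using Or.inl hm'
    · simp
  have haux : ∀ (m m' : E) (t t' : ℝ), (m ∈ M ∨ m = 0) → (m' ∈ M ∨ m' = 0) → 0 ≤ t → 0 ≤ t' →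
      m + t • y ≠ 0 → (m + t • y) + (m' + t' • y) = 0 → False := by
    intro m m' t t' hm hm' ht ht' hz hsum
    have hsum2 : (m + m') + (t + t') • y = 0 := by
      rw [add_smul]; rw [← hsum]; abel
    rcases eq_or_lt_of_le (by positivity : (0:ℝ) ≤ t + t') with hs | hs
    · have ht0 : t = 0 := by linarith
      have ht'0 : t' = 0 := by linarith
      subst ht0; subst ht'0
      simp only [zero_smul, add_zero] at hz hsum
      have hmM : m ∈ M := hm.resolve_right hz
      have hm'eq : m' = -m := (neg_eq_of_add_eq_zero_right hsum).symm
      have hm'M : m' ∈ M := by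
        refine hm'.resolve_right ?_
        rw [hm'eq]
        simpa using hz
      exact hMmem.2.2 m hmM (hm'eq ▸ hm'M)
    · rcases hadd0 m m' hm hm' with hn | hn
      · have : -y ∈ M := by
          have h1 : (t + t')⁻¹ • (m + m') ∈ M :=
            hMmem.2.1 _ hn _ (by positivity)
          have h2 : (t + t')⁻¹ • (m + m') = -y := by
            have : m + m' = -((t + t') • y) := by
              rw [eq_neg_iff_add_eq_zero]; exact hsum2
            rw [this, smul_neg, smul_smul, inv_mul_cancel₀ hs.ne', one_smul]
          rwa [h2] at h1
        exact hnyM this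
      · rw [hn, zero_add] at hsum2
        exact hy0 ((smul_eq_zero.1 hsum2).resolve_left hs.ne')
  have hM'cone : GoodCone M' := by
    refine ⟨?_, ?_, ?_⟩
    · rintro a ⟨ha0, m, t, hm, ht, rfl⟩ b ⟨hb0, m', t', hm', ht', rfl⟩
      refine ⟨fun h => haux m m' t t' hm hm' ht ht' ha0 h, m + m', t + t',
        hadd0 m m' hm hm', by positivity, by rw [add_smul]; abel⟩
    · rintro a ⟨ha0, m, t, hm, ht, rfl⟩ r hr
      refine ⟨smul_ne_zero hr.ne' ha0, r • m, r * t, ?_, by positivity, ?_⟩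
      · rcases hm with hm | rfl
        · exact Or.inl (hMmem.2.1 m hm r hr)
        · simp
      · rw [smul_add, smul_smul]
    · rintro a ⟨ha0, m, t, hm, ht, rfl⟩ ⟨hb0, m', t', hm', ht', hneg⟩
      exact haux m m' t t' hm hm' ht ht' ha0 (by rw [← hneg]; abel)
  have hMM' : M ⊆ M' := by
    intro m hm
    refine ⟨?_, m, 0, Or.inl hm, le_refl _, by simp⟩
    intro h0; rw [h0] at hm; exact goodCone_zero_not_mem hMmem hm
  have : M' = M := hMmax M' hM'cone hMM'
  have hyM' : y ∈ M' := ⟨hy0, 0, 1, Or.inr rfl, zero_le_one, by simp⟩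
  rw [this] at hyM'
  exact hyM hyM'

end Aux

theorem stmt_11 (d : ℕ) (G : Set (Fin d → ℝ)) (hG : Convex ℝ G)
    (x : Fin d → ℝ) (hx : x ∉ G) :
    ∃ H : Set ((Fin d → ℝ) → EReal),
      (∀ h ∈ H, IsAffExt h) ∧
      (⨆ h ∈ H, h x) = ⊤ ∧
      (∀ h ∈ H, ∀ x' ∈ G, h x' = ⊥) := by
  classical
  set K : Set (Fin d → ℝ) := {z | ∃ a : ℝ, 0 < a ∧ ∃ y ∈ G, z = a • (y - x)} with hKdef
  have hKcone : GoodCone K := by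
    refine ⟨?_, ?_, ?_⟩
    · rintro z ⟨a, ha, y, hy, rfl⟩ z' ⟨b, hb, y', hy', rfl⟩
      have hab : (0:ℝ) < a + b := by positivity
      refine ⟨a + b, hab, (a/(a+b)) • y + (b/(a+b)) • y',
        hG hy hy' (by positivity) (by positivity) (by field_simp), ?_⟩
      have h1 : (a+b) * (a/(a+b)) = a := by field_simp
      have h2 : (a+b) * (b/(a+b)) = b := by field_simp
      rw [smul_sub (a+b), smul_add, smul_smul, smul_smul, h1, h2, smul_sub a, smul_sub b,
        add_smul]
      abel
    · rintro z ⟨a, ha, y, hy, rfl⟩ r hr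
      exact ⟨r * a, by positivity, y, hy, by rw [smul_smul]⟩
    · rintro z ⟨a, ha, y, hy, rfl⟩ ⟨b, hb, y', hy', hneg⟩
      have hab : (0:ℝ) < a + b := by positivity
      have heq : a • (y - x) + b • (y' - x) = 0 := by rw [← hneg]; abel
      have h3 : a • y + b • y' - (a • x + b • x) = 0 := by
        rw [smul_sub, smul_sub] at heq; rw [← heq]; abel
      have h4 : a • y + b • y' = (a + b) • x := by
        rw [add_smul]; exact sub_eq_zero.mp h3
      have hxeq : (a/(a+b)) • y + (b/(a+b)) • y' = x := by
        rw [div_eq_inv_mul, div_eq_inv_mul, ← smul_smul, ← smul_smul, ← smul_add, h4,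
          smul_smul, inv_mul_cancel₀ hab.ne', one_smul]
      exact hx (hxeq ▸ hG hy hy' (by positivity) (by positivity) (by field_simp))
  obtain ⟨M, hKM, hM, htot⟩ := exists_maximal_goodCone K hKcone
  set f : (Fin d → ℝ) → EReal := fun z => if z ∈ M then ⊥ else if -z ∈ M then ⊤ else 0
    with hfdef
  have h0M : (0 : Fin d → ℝ) ∉ M := goodCone_zero_not_mem hM
  have fbot : ∀ z, z ∈ M → f z = ⊥ := fun z hz => if_pos hz
  have ftop : ∀ z, -z ∈ M → f z = ⊤ := by
    intro z hz
    have hzM : z ∉ M := by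
      have := hM.2.2 (-z) hz; simpa using this
    simp only [hfdef, if_neg hzM, if_pos hz]
  have f0 : f 0 = 0 := by simp [hfdef, h0M]
  have htri : ∀ z, (z ∈ M ∧ f z = ⊥) ∨ (-z ∈ M ∧ f z = ⊤) ∨ (z = 0 ∧ f z = 0) := by
    intro z
    by_cases hz : z ∈ M
    · exact Or.inl ⟨hz, fbot z hz⟩
    by_cases hnz : -z ∈ M
    · exact Or.inr (Or.inl ⟨hnz, ftop z hnz⟩)
    have hz0 : z = 0 := by
      by_contra h
      exact (htot z h).elim hz hnz
    exact Or.inr (Or.inr ⟨hz0, by rw [hz0]; exact f0⟩)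
  have hmemsmul : ∀ (z : Fin d → ℝ) (a : ℝ), 0 < a → (a • z ∈ M ↔ z ∈ M) := by
    intro z a ha
    constructor
    · intro h
      have := hM.2.1 _ h a⁻¹ (by positivity)
      rwa [smul_smul, inv_mul_cancel₀ ha.ne', one_smul] at this
    · intro h; exact hM.2.1 _ h a ha
  have hlin : IsLinExt f := by
    constructor
    · intro α z
      rcases lt_trichotomy α 0 with hα | rfl | hα
      · have e1 : α • z = (-α) • (-z) := by rw [smul_neg, neg_smul, neg_neg]
        have e2 : -(α • z) = (-α) • z := by rw [neg_smul]
        rcases htri z with ⟨hz, hfz⟩ | ⟨hz, hfz⟩ | ⟨hz, hfz⟩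
        · have : -(α • z) ∈ M := by rw [e2, hmemsmul z (-α) (by linarith)]; exact hz
          rw [ftop _ this, hfz, EReal.coe_mul_bot_of_neg hα]
        · have : α • z ∈ M := by rw [e1, hmemsmul (-z) (-α) (by linarith)]; exact hz
          rw [fbot _ this, hfz, EReal.coe_mul_top_of_neg hα]
        · rw [hz, smul_zero, f0, mul_zero]
      · rw [zero_smul, f0, EReal.coe_zero, zero_mul]
      · rcases htri z with ⟨hz, hfz⟩ | ⟨hz, hfz⟩ | ⟨hz, hfz⟩
        · have : α • z ∈ M := (hmemsmul z α hα).mpr hz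
          rw [fbot _ this, hfz, EReal.coe_mul_bot_of_pos hα]
        · have : -(α • z) ∈ M := by
            rw [← smul_neg]; exact (hmemsmul (-z) α hα).mpr hz
          rw [ftop _ this, hfz, EReal.coe_mul_top_of_pos hα]
        · rw [hz, smul_zero, f0, mul_zero]
    · intro z z' hnot
      rcases htri z with ⟨hz, hfz⟩ | ⟨hz, hfz⟩ | ⟨hz, hfz⟩ <;>
        rcases htri z' with ⟨hz', hfz'⟩ | ⟨hz', hfz'⟩ | ⟨hz', hfz'⟩
      · rw [fbot _ (hM.1 _ hz _ hz'), hfz, hfz']; rfl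
      · exact absurd (Or.inr ⟨hfz, hfz'⟩) hnot
      · rw [hz', add_zero, hfz, f0, add_zero]
      · exact absurd (Or.inl ⟨hfz, hfz'⟩) hnot
      · have : -(z + z') ∈ M := by
          have := hM.1 _ hz _ hz'; rwa [← neg_add] at this
        rw [ftop _ this, hfz, hfz']; rfl
      · rw [hz', add_zero, hfz, f0, add_zero]
      · rw [hz, zero_add, f0, zero_add]
      · rw [hz, zero_add, f0, zero_add]
      · rw [hz, zero_add, f0, zero_add]
  refine ⟨{h | ∃ β : ℝ, h = fun z => f (z - x) + (β : EReal)}, ?_, ?_, ?_⟩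
  · rintro h ⟨β, rfl⟩
    exact ⟨f, x, β, hlin, fun z => rfl⟩
  · rw [EReal.eq_top_iff_forall_lt]
    intro r
    have hmem : (fun z => f (z - x) + ((r + 1 : ℝ) : EReal)) ∈
        {h | ∃ β : ℝ, h = fun z => f (z - x) + (β : EReal)} := ⟨r + 1, rfl⟩
    have hle : ((r + 1 : ℝ) : EReal) ≤
        ⨆ h ∈ {h | ∃ β : ℝ, h = fun z => f (z - x) + (β : EReal)}, h x :=
      le_iSup₂_of_le _ hmem (by simp only [sub_self, f0, zero_add, le_refl])
    exact lt_of_lt_of_le (EReal.coe_lt_coe_iff.mpr (by linarith)) hle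
  · rintro h ⟨β, rfl⟩ x' hx'
    have : x' - x ∈ K := ⟨1, one_pos, x', hx', (one_smul ℝ _).symm⟩
    show f (x' - x) + (β : EReal) = ⊥
    rw [fbot _ (hKM this), EReal.bot_add]
end

section
/- Let g : ℝᵈ → ℝ ∪ {+∞} be convex, P ⊆ effdom(g) convex, and suppose a, c ∈ P with a ≠ c and g(b) = ρg(a) + (1-ρ)g(c) where b = ρa + (1-ρ)c for some 0 < ρ < 1. Then every affine extended function h that supports g at b also supports g at a. -/
theorem stmt_16 (d : ℕ) (g : (Fin d → ℝ) → EReal) (hbot : ∀ x, g x ≠ ⊥)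
    (hconv : Convex ℝ {p : (Fin d → ℝ) × ℝ | g p.1 ≤ (p.2 : EReal)})
    (P : Set (Fin d → ℝ)) (hP : Convex ℝ P) (hPdom : ∀ x ∈ P, g x ≠ ⊤)
    (a c : Fin d → ℝ) (ha : a ∈ P) (hc : c ∈ P) (hac : a ≠ c)
    (ρ : ℝ) (hρ0 : 0 < ρ) (hρ1 : ρ < 1)
    (hbval : g (ρ • a + (1 - ρ) • c) = (ρ : EReal) * g a + ((1 - ρ : ℝ) : EReal) * g c)
    (h : (Fin d → ℝ) → EReal) (hh : IsAffExt h)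
    (hsupp_eq : h (ρ • a + (1 - ρ) • c) = g (ρ • a + (1 - ρ) • c))
    (hsupp_le : ∀ x, h x ≤ g x) :
    h a = g a ∧ ∀ x, h x ≤ g x := by

  refine ⟨?_, hsupp_le⟩
  obtain ⟨f, x₀, β, ⟨hsmul, hadd⟩, hfx⟩ := hh
  have hga : ((g a).toReal : EReal) = g a := EReal.coe_toReal (hPdom a ha) (hbot a)
  have hgc : ((g c).toReal : EReal) = g c := EReal.coe_toReal (hPdom c hc) (hbot c)
  set A := (g a).toReal with hA
  set C := (g c).toReal with hC
  -- f (a - x₀) ≠ ⊤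
  have hfa_ne_top : f (a - x₀) ≠ ⊤ := by
    intro htop
    have hle := hsupp_le a
    rw [hfx a, htop] at hle
    rw [EReal.top_add_coe] at hle
    exact hPdom a ha (top_le_iff.mp hle)
  have hfc_ne_top : f (c - x₀) ≠ ⊤ := by
    intro htop
    have hle := hsupp_le c
    rw [hfx c, htop] at hle
    rw [EReal.top_add_coe] at hle
    exact hPdom c hc (top_le_iff.mp hle)
  have hρ0' : (0:EReal) < (ρ : EReal) := by exact_mod_cast hρ0
  have hρ1' : (0:EReal) < ((1 - ρ : ℝ) : EReal) := by
    have : (0:ℝ) < 1 - ρ := by linarith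
    exact_mod_cast this
  have hmul_ne_top : ∀ (t : ℝ), 0 < t → ∀ X : EReal, X ≠ ⊤ → (t : EReal) * X ≠ ⊤ := by
    intro t ht X hX
    induction X using EReal.rec with
    | bot => simp [EReal.coe_mul_bot_of_pos ht]
    | coe r => rw [← EReal.coe_mul]; exact EReal.coe_ne_top _
    | top => exact absurd rfl hX
  have h1 : f (ρ • (a - x₀)) = (ρ : EReal) * f (a - x₀) := hsmul ρ _
  have h2 : f ((1 - ρ) • (c - x₀)) = ((1 - ρ : ℝ) : EReal) * f (c - x₀) := hsmul (1 - ρ) _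
  have h1top : f (ρ • (a - x₀)) ≠ ⊤ := by
    rw [h1]; exact hmul_ne_top ρ hρ0 _ hfa_ne_top
  have h2top : f ((1 - ρ) • (c - x₀)) ≠ ⊤ := by
    rw [h2]; exact hmul_ne_top (1 - ρ) (by linarith) _ hfc_ne_top
  have hdecomp : ρ • a + (1 - ρ) • c - x₀ = ρ • (a - x₀) + (1 - ρ) • (c - x₀) := by
    simp only [smul_sub]; module
  have hfb : f (ρ • a + (1 - ρ) • c - x₀)
      = (ρ : EReal) * f (a - x₀) + ((1 - ρ : ℝ) : EReal) * f (c - x₀) := by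
    rw [hdecomp, hadd _ _ (by tauto), h1, h2]
  -- g b is real
  have hgb_ne_top : g (ρ • a + (1 - ρ) • c) ≠ ⊤ := by
    rw [hbval, ← hga, ← hgc, ← EReal.coe_mul, ← EReal.coe_mul, ← EReal.coe_add]
    exact EReal.coe_ne_top _
  -- f (a - x₀) ≠ ⊥
  have hb_eq : f (ρ • a + (1 - ρ) • c - x₀) + (β : EReal) = g (ρ • a + (1 - ρ) • c) := by
    rw [← hfx]; exact hsupp_eq
  have hfb_ne_bot : f (ρ • a + (1 - ρ) • c - x₀) ≠ ⊥ := by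
    intro hbotf
    rw [hbotf] at hb_eq
    rw [EReal.bot_add] at hb_eq
    exact hbot _ hb_eq.symm
  have hfa_ne_bot : f (a - x₀) ≠ ⊥ := by
    intro hbotf
    apply hfb_ne_bot
    rw [hfb, hbotf, EReal.coe_mul_bot_of_pos hρ0]
    exact EReal.add_eq_bot_iff.mpr (Or.inl rfl)
  have hfc_ne_bot : f (c - x₀) ≠ ⊥ := by
    intro hbotf
    apply hfb_ne_bot
    rw [hfb, hbotf, EReal.coe_mul_bot_of_pos (show (0:ℝ) < 1 - ρ by linarith)]
    exact EReal.add_eq_bot_iff.mpr (Or.inr rfl)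
  have hr : ((f (a - x₀)).toReal : EReal) = f (a - x₀) := EReal.coe_toReal hfa_ne_top hfa_ne_bot
  have hs : ((f (c - x₀)).toReal : EReal) = f (c - x₀) := EReal.coe_toReal hfc_ne_top hfc_ne_bot
  set r := (f (a - x₀)).toReal with hrdef
  set s := (f (c - x₀)).toReal with hsdef
  -- the key real equation
  have key : ρ * r + (1 - ρ) * s + β = ρ * A + (1 - ρ) * C := by
    have keyE : (↑ρ * f (a - x₀) + ((1 - ρ : ℝ) : EReal) * f (c - x₀)) + (β : EReal)
        = (ρ : EReal) * (A : EReal) + ((1 - ρ : ℝ) : EReal) * (C : EReal) := by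
      rw [hga, hgc, ← hfb, hb_eq, hbval]
    rw [← hr, ← hs] at keyE
    exact_mod_cast keyE
  have hra : r + β ≤ A := by
    have hle := hsupp_le a
    rw [hfx a, ← hr, ← hga, ← EReal.coe_add] at hle
    exact_mod_cast hle
  have hsc : s + β ≤ C := by
    have hle := hsupp_le c
    rw [hfx c, ← hs, ← hgc, ← EReal.coe_add] at hle
    exact_mod_cast hle
  have hfin : r + β = A := by
    nlinarith [mul_le_mul_of_nonneg_left hra (le_of_lt hρ0),
      mul_le_mul_of_nonneg_left hsc (show (0:ℝ) ≤ 1 - ρ by linarith)]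
  rw [hfx a, ← hr, ← EReal.coe_add, hfin, hga]
end
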